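/- Let H_b ∈ ℂ^{N_r×N_t} and H_e ∈ ℂ^{N_e×N_t} be complex matrices such that Δ := H_bᴴH_b − H_eᴴH_e is positive semidefinite, and let X ∈ ℂ^{N_t×N_t} be Hermitian positive semidefinite. Then det(I + H_b X H_bᴴ) / det(I + H_e X H_eᴴ) = det(I + Δ^{1/2} X Δ^{1/2} − Δ^{1/2} X H_eᴴ (I + H_e X H_eᴴ)^{-1} H_e X Δ^{1/2}), where Δ^{1/2} is the unique positive semidefinite square root of Δ. -/

import Mathlib

open Matrix
open scoped ComplexOrder

/-!
Stack `He` on top of `Δ^{1/2}`: the resulting matrix `R` has Gram matrix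
`Heᴴ He + Δ = Hbᴴ Hb`, so by Sylvester's determinant identity
`det (1 + Hb X Hbᴴ) = det (1 + X Hbᴴ Hb) = det (1 + R X Rᴴ)`. Written in blocks, `1 + R X Rᴴ`
has top-left block `1 + He X Heᴴ`, which is positive definite, and the Schur complement of that
block is the matrix on the right-hand side.
-/

noncomputable def Matrix.PosSemidef.sqrt {n 𝕜 : Type*} [Fintype n] [DecidableEq n] [RCLike 𝕜]
    {A : Matrix n n 𝕜} (hA : A.PosSemidef) : Matrix n n 𝕜 :=
  hA.1.eigenvectorUnitary.1 * diagonal ((↑) ∘ (√·) ∘ hA.1.eigenvalues) *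
  (star hA.1.eigenvectorUnitary : Matrix n n 𝕜)

namespace Matrix

section Sqrt

variable {n 𝕜 : Type*} [Fintype n] [DecidableEq n] [RCLike 𝕜] {A : Matrix n n 𝕜}

theorem PosSemidef.sqrt_mul_self (hA : A.PosSemidef) : hA.sqrt * hA.sqrt = A := by
  set U : Matrix n n 𝕜 := hA.1.eigenvectorUnitary.1
  have hU : star U * U = 1 := Unitary.coe_star_mul_self _
  set D : Matrix n n 𝕜 := diagonal ((↑) ∘ (√·) ∘ hA.1.eigenvalues)
  have hD : D * D = diagonal (((↑) : ℝ → 𝕜) ∘ hA.1.eigenvalues) := by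
    rw [diagonal_mul_diagonal]
    congr 1 with i
    simp [← RCLike.ofReal_mul, Real.mul_self_sqrt (hA.eigenvalues_nonneg i)]
  calc hA.sqrt * hA.sqrt = U * (D * (star U * U) * D) * star U := by
        simp only [PosSemidef.sqrt, U, D, Matrix.mul_assoc]
    _ = A := by
      rw [hU, Matrix.mul_one, hD]
      exact hA.1.spectral_theorem.symm

theorem PosSemidef.conjTranspose_sqrt (hA : A.PosSemidef) : hA.sqrtᴴ = hA.sqrt := by
  simp [PosSemidef.sqrt, conjTranspose_mul, Matrix.mul_assoc, Function.comp_def,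
    star_eq_conjTranspose, Pi.star_def]

end Sqrt

variable {m n p α : Type*}

theorem det_one_add_mul_mul_conjTranspose [Fintype m] [Fintype n] [DecidableEq m]
    [DecidableEq n] [CommRing α] [StarRing α]
    (C : Matrix m n α) (X : Matrix n n α) :
    det (1 + C * X * Cᴴ) = det (1 + X * (Cᴴ * C)) := by
  rw [Matrix.mul_assoc, det_one_add_mul_comm, Matrix.mul_assoc]

theorem one_add_fromRows_mul_mul_conjTranspose [Fintype n] [DecidableEq m] [DecidableEq p]
    [CommRing α] [StarRing α]
    (A : Matrix m n α) (B : Matrix p n α) (X : Matrix n n α) :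
    1 + fromRows A B * X * (fromRows A B)ᴴ
      = fromBlocks (1 + A * X * Aᴴ) (A * X * Bᴴ) (B * X * Aᴴ) (1 + B * X * Bᴴ) := by
  rw [conjTranspose_fromRows_eq_fromCols_conjTranspose, fromRows_mul, fromRows_mul_fromCols,
    ← fromBlocks_one, fromBlocks_add]
  simp

theorem det_fromBlocks₁₁_of_det_ne_zero [Fintype m] [Fintype n] [DecidableEq m]
    [DecidableEq n] [Field α] (A : Matrix m m α) (B : Matrix m n α)
    (C : Matrix n m α) (D : Matrix n n α) (hA : A.det ≠ 0) :
    (fromBlocks A B C D).det = A.det * (D - C * A⁻¹ * B).det := by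
  have := invertibleOfIsUnitDet A hA.isUnit
  rw [det_fromBlocks₁₁, invOf_eq_nonsing_inv]

end Matrix

/-- the form of the secrecy-rate determinant after applying the
matrix inversion lemma (proof of Lemma 1 of the paper). -/
theorem stmt_1 {Nr Nt Ne : ℕ}
    (Hb : Matrix (Fin Nr) (Fin Nt) ℂ) (He : Matrix (Fin Ne) (Fin Nt) ℂ)
    (X : Matrix (Fin Nt) (Fin Nt) ℂ) (hX : X.PosSemidef)
    (hΔ : (Hbᴴ * Hb - Heᴴ * He).PosSemidef) :
    (1 + Hb * X * Hbᴴ).det / (1 + He * X * Heᴴ).det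
      = (1 + hΔ.sqrt * X * hΔ.sqrt
          - hΔ.sqrt * X * Heᴴ * (1 + He * X * Heᴴ)⁻¹ * He * X * hΔ.sqrt).det := by
  set S := hΔ.sqrt
  have hS : Sᴴ = S := hΔ.conjTranspose_sqrt
  set M := 1 + He * X * Heᴴ
  have hM : M.det ≠ 0 :=
    (PosDef.one.add_posSemidef (hX.mul_mul_conjTranspose_same He)).det_pos.ne'
  have gram : (fromRows He S)ᴴ * fromRows He S = Hbᴴ * Hb := by
    rw [conjTranspose_fromRows_eq_fromCols_conjTranspose, fromCols_mul_fromRows, hS,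
      hΔ.sqrt_mul_self, add_sub_cancel]
  have schur : (1 + Hb * X * Hbᴴ).det
      = M.det * (1 + S * X * S - S * X * Heᴴ * M⁻¹ * He * X * S).det := by
    rw [det_one_add_mul_mul_conjTranspose, ← gram, ← det_one_add_mul_mul_conjTranspose,
      one_add_fromRows_mul_mul_conjTranspose, det_fromBlocks₁₁_of_det_ne_zero _ _ _ _ hM, hS]
    simp only [Matrix.mul_assoc]
  rw [schur, mul_div_cancel_left₀ _ hM]
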